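/- arXiv:2004.13437 — 2 statements merged into one kernel-verified Lean document; each statement's English description precedes it below -/
import Mathlib

section
/- Let K ⊂ ℝⁿ be compact with diameter d, let x ≠ y ∈ K, and let α¹, α² ∈ ℝ. Then the extended Kantorovich–Rubinstein norm of the measure μ = α¹ (δ_x − δ_y)/|x − y| + α² δ_x satisfies (|α¹| + |α²|)/(d+1) ≤ ‖μ‖_{KR} ≤ |α¹| + |α²|. -/
/-- Let `K ⊆ ℝⁿ` be compact with diameter `d`, `x ≠ y ∈ K`, and `α¹ α² ∈ ℝ`. The
extended Kantorovich–Rubinstein norm of `μ = α¹ (δ_x - δ_y)/|x - y| + α² δ_x`, i.e.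
the supremum over `f` with `Lip(f) ≤ 1` and `‖f‖_∞ ≤ 1` of
`α¹ (f x - f y)/|x - y| + α² f x`, lies between `(|α¹| + |α²|)/(d + 1)` and
`|α¹| + |α²|`. -/
theorem stmt12 {n : ℕ} (K : Set (EuclideanSpace ℝ (Fin n))) (hK : IsCompact K)
    (x y : EuclideanSpace ℝ (Fin n)) (hx : x ∈ K) (hy : y ∈ K) (hxy : x ≠ y)
    (α₁ α₂ : ℝ) :
    (|α₁| + |α₂|) / (Metric.diam K + 1) ≤
      (⨆ f : {f : EuclideanSpace ℝ (Fin n) → ℝ //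
          LipschitzOnWith 1 f K ∧ ∀ z ∈ K, |f z| ≤ 1},
        (α₁ * (f.1 x - f.1 y) / dist x y + α₂ * f.1 x)) ∧
    (⨆ f : {f : EuclideanSpace ℝ (Fin n) → ℝ //
        LipschitzOnWith 1 f K ∧ ∀ z ∈ K, |f z| ≤ 1},
      (α₁ * (f.1 x - f.1 y) / dist x y + α₂ * f.1 x)) ≤ |α₁| + |α₂| := by
  set d := Metric.diam K with hd
  have hd0 : 0 ≤ d := Metric.diam_nonneg
  have hd1 : (0:ℝ) < d + 1 := by linarith
  have hD : (0:ℝ) < dist x y := dist_pos.mpr hxy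
  -- per-function upper bound
  have key : ∀ f : {f : EuclideanSpace ℝ (Fin n) → ℝ //
      LipschitzOnWith 1 f K ∧ ∀ z ∈ K, |f z| ≤ 1},
      α₁ * (f.1 x - f.1 y) / dist x y + α₂ * f.1 x ≤ |α₁| + |α₂| := by
    rintro ⟨f, hfl, hfb⟩
    have h1 : |f x - f y| ≤ dist x y := by
      have := hfl.dist_le_mul x hx y hy
      simpa [Real.dist_eq] using this
    have h2 : |f x| ≤ 1 := hfb x hx
    have e1 : α₁ * (f x - f y) / dist x y ≤ |α₁| := by
      rw [div_le_iff₀ hD]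
      calc α₁ * (f x - f y) ≤ |α₁ * (f x - f y)| := le_abs_self _
        _ = |α₁| * |f x - f y| := abs_mul _ _
        _ ≤ |α₁| * dist x y := by
            exact mul_le_mul_of_nonneg_left h1 (abs_nonneg _)
    have e2 : α₂ * f x ≤ |α₂| := by
      calc α₂ * f x ≤ |α₂ * f x| := le_abs_self _
        _ = |α₂| * |f x| := abs_mul _ _
        _ ≤ |α₂| * 1 := mul_le_mul_of_nonneg_left h2 (abs_nonneg _)
        _ = |α₂| := mul_one _
    linarith
  have hne : Nonempty {f : EuclideanSpace ℝ (Fin n) → ℝ //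
      LipschitzOnWith 1 f K ∧ ∀ z ∈ K, |f z| ≤ 1} := by
    refine ⟨⟨fun _ => 0, ?_, fun z _ => by simp⟩⟩
    intro a _ b _
    simp
  have hbdd : BddAbove (Set.range fun f : {f : EuclideanSpace ℝ (Fin n) → ℝ //
      LipschitzOnWith 1 f K ∧ ∀ z ∈ K, |f z| ≤ 1} =>
      α₁ * (f.1 x - f.1 y) / dist x y + α₂ * f.1 x) := by
    exact ⟨|α₁| + |α₂|, by rintro _ ⟨f, rfl⟩; exact key f⟩
  constructor
  · -- lower bound via test function
    set s₁ : ℝ := if 0 ≤ α₁ then 1 else -1 with hs₁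
    set s₂ : ℝ := if 0 ≤ α₂ then 1 else -1 with hs₂
    have hs₁a : |s₁| ≤ 1 := by rw [hs₁]; split <;> norm_num
    have hs₂a : |s₂| ≤ 1 := by rw [hs₂]; split <;> norm_num
    have hs₁m : s₁ * α₁ = |α₁| := by
      rw [hs₁]; split
      · rw [abs_of_nonneg ‹_›]; ring
      · rw [abs_of_neg (lt_of_not_ge ‹_›)]; ring
    have hs₂m : s₂ * α₂ = |α₂| := by
      rw [hs₂]; split
      · rw [abs_of_nonneg ‹_›]; ring
      · rw [abs_of_neg (lt_of_not_ge ‹_›)]; ring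
    set g : EuclideanSpace ℝ (Fin n) → ℝ := fun z => (s₂ - s₁ * dist x z) / (d + 1)
      with hg
    have hglip : LipschitzOnWith 1 g K := by
      apply LipschitzOnWith.of_dist_le_mul
      intro a _ b _
      have h1 : |dist x a - dist x b| ≤ dist a b := by
        rw [dist_comm x a, dist_comm x b]; exact abs_dist_sub_le a b x
      have hgab : g a - g b = s₁ * (dist x b - dist x a) / (d + 1) := by
        rw [hg]; ring
      rw [Real.dist_eq, hgab, abs_div, abs_of_pos hd1, div_le_iff₀ hd1, abs_mul]
      push_cast
      have h2 : |dist x b - dist x a| ≤ dist a b := by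
        rw [abs_sub_comm]; exact h1
      nlinarith [abs_nonneg s₁, abs_nonneg (dist x b - dist x a),
        dist_nonneg (x := a) (y := b), mul_le_mul hs₁a h2 (abs_nonneg _) zero_le_one]
    have hgb : ∀ z ∈ K, |g z| ≤ 1 := by
      intro z hz
      have hdz : dist x z ≤ d := Metric.dist_le_diam_of_mem hK.isBounded hx hz
      rw [hg]
      rw [abs_div, abs_of_pos hd1, div_le_one hd1]
      calc |s₂ - s₁ * dist x z| ≤ |s₂| + |s₁ * dist x z| := abs_sub _ _
        _ = |s₂| + |s₁| * dist x z := by rw [abs_mul, abs_of_nonneg dist_nonneg]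
        _ ≤ 1 + 1 * d := by
            have := mul_le_mul hs₁a hdz dist_nonneg zero_le_one
            linarith
        _ = d + 1 := by ring
    have hval : α₁ * (g x - g y) / dist x y + α₂ * g x = (|α₁| + |α₂|) / (d + 1) := by
      have hgx : g x = s₂ / (d + 1) := by simp [hg]
      have hgy : g y = (s₂ - s₁ * dist x y) / (d + 1) := by rw [hg]
      rw [hgx, hgy, ← hs₁m, ← hs₂m]
      field_simp
      ring
    calc (|α₁| + |α₂|) / (d + 1)
        = α₁ * (g x - g y) / dist x y + α₂ * g x := hval.symm
      _ ≤ _ := le_ciSup hbdd ⟨g, hglip, hgb⟩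
  · exact ciSup_le key
end

section
/- Let K be a compact metric space. The normed space (ℳ₀(K), ‖·‖_{KR₀}) of balanced finite signed Borel measures with the Kantorovich–Rubinstein norm is not complete, provided K is infinite: there exists a KR₀-Cauchy sequence of finite linear combinations of dipoles whose limit functional on Lip₀(K) is not represented by any finite signed Borel measure. -/
/-!
An infinite compact metric space has a non-isolated point `x`, hence points `u n` with
`dist (u (n + 1)) x < dist (u n) x / 4`. The dipole sums `c m = ∑_{j < m} (δ_{u j} - δ_x)`
are `KR₀`-Cauchy because `∑ dist (u j) x < ∞`. The tent of height `r j = dist (u j) x / 4`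
at `u j` pairs with `c m` to `r j` as soon as `m > j`, so a representing signed measure would
give mass `≥ 1` to each of the pairwise disjoint balls `ball (u j) (r j)`, which no finite
measure can do.
-/

open MeasureTheory Filter Topology ENNReal

open Finset Metric Function

section Tent

variable {X : Type*} [PseudoMetricSpace X]

def tent (y : X) (r : ℝ) (z : X) : ℝ := max (r - dist z y) 0

lemma lipschitzWith_tent (y : X) (r : ℝ) : LipschitzWith 1 (tent y r) :=
  ((LipschitzWith.const r).sub (LipschitzWith.dist_left y)).max_const 0 |>.weaken (by norm_num)

lemma tent_nonneg (y : X) (r : ℝ) (z : X) : 0 ≤ tent y r z := le_max_right _ _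

lemma tent_self {r : ℝ} (hr : 0 ≤ r) (y : X) : tent y r y = r := by
  simp [tent, hr]

lemma tent_eq_zero_of_notMem_ball {y z : X} {r : ℝ} (hz : z ∉ ball y r) : tent y r z = 0 :=
  max_eq_right (sub_nonpos.2 (not_lt.1 hz))

lemma tent_le_indicator_ball (y : X) (r : ℝ) : tent y r ≤ (ball y r).indicator fun _ => r := by
  intro z
  by_cases hz : z ∈ ball y r
  · rw [Set.indicator_of_mem hz]
    exact max_le (sub_le_self _ dist_nonneg) (dist_nonneg.trans (mem_ball.1 hz).le)
  · rw [Set.indicator_of_notMem hz, tent_eq_zero_of_notMem_ball hz]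

end Tent

section Dipoles

variable {X : Type*}

noncomputable def dipoleSum (u : ℕ → X) (x : X) (m : ℕ) : X →₀ ℝ :=
  ∑ j ∈ range m, (Finsupp.single (u j) 1 - Finsupp.single x 1)

lemma sum_dipoleSum (u : ℕ → X) (x : X) (m : ℕ) (g : X → ℝ) :
    ((dipoleSum u x m).sum fun z a => a * g z) = ∑ j ∈ range m, (g (u j) - g x) := by
  have h := Finsupp.linearCombination_apply ℝ (v := g) (dipoleSum u x m)
  simp only [smul_eq_mul] at h
  rw [← h, dipoleSum, map_sum]
  simp only [map_sub, Finsupp.linearCombination_single, smul_eq_mul, one_mul]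

end Dipoles

lemma abs_sum_range_sub_sum_range_le {a b : ℕ → ℝ} (hab : ∀ j, |a j| ≤ b j) (m k : ℕ) :
    |∑ j ∈ range m, a j - ∑ j ∈ range k, a j| ≤
      |∑ j ∈ range m, b j - ∑ j ∈ range k, b j| := by
  wlog hkm : k ≤ m generalizing m k
  · rw [abs_sub_comm, abs_sub_comm (∑ j ∈ range m, b j)]
    exact this k m (le_of_not_ge hkm)
  rw [← sum_Ico_eq_sub _ hkm, ← sum_Ico_eq_sub _ hkm]
  calc |∑ j ∈ Ico k m, a j| ≤ ∑ j ∈ Ico k m, b j :=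
        (abs_sum_le_sum_abs _ _).trans (sum_le_sum fun j _ => hab j)
    _ ≤ |∑ j ∈ Ico k m, b j| := le_abs_self _

section QuarterSequence

variable {X : Type*} [PseudoMetricSpace X] {u : ℕ → X} {x : X}
  (hu : ∀ n, dist (u (n + 1)) x < dist (u n) x / 4)
include hu

lemma dist_pos_of_lt_quarter (n : ℕ) : 0 < dist (u n) x := by
  linarith [hu n, dist_nonneg (x := u (n + 1)) (y := x)]

lemma dist_lt_quarter_of_lt {i j : ℕ} (hij : i < j) : dist (u j) x < dist (u i) x / 4 := by
  have hanti : Antitone fun n => dist (u n) x :=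
    antitone_nat_of_succ_le fun n => by linarith [hu n, dist_pos_of_lt_quarter hu n]
  exact (hanti hij).trans_lt (hu i)

lemma summable_dist_of_lt_quarter : Summable fun n => dist (u n) x := by
  have hgeom : ∀ n, dist (u n) x ≤ dist (u 0) x * (1 / 4) ^ n := by
    intro n
    induction n with
    | zero => simp
    | succ n ih => rw [pow_succ]; linarith [hu n]
  exact .of_nonneg_of_le (fun _ => dist_nonneg) hgeom
    ((summable_geometric_of_lt_one (by norm_num) (by norm_num)).mul_left _)

lemma pairwise_disjoint_ball_of_lt_quarter :
    Pairwise (Disjoint on fun n => ball (u n) (dist (u n) x / 4)) := by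
  refine (pairwise_disjoint_on _).2 fun i j hij => ball_disjoint_ball ?_
  have hj := dist_lt_quarter_of_lt hu hij
  linarith [dist_triangle (u i) (u j) x, dist_pos_of_lt_quarter hu i]

lemma sum_dipoleSum_tent {j m : ℕ} (hjm : j < m) :
    ((dipoleSum u x m).sum fun z a => a * tent (u j) (dist (u j) x / 4) z) = dist (u j) x / 4 := by
  have hr : 0 ≤ dist (u j) x / 4 := by linarith [dist_pos_of_lt_quarter hu j]
  have hx : tent (u j) (dist (u j) x / 4) x = 0 :=
    tent_eq_zero_of_notMem_ball (by rw [mem_ball, dist_comm]; linarith)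
  have hother : ∀ i ≠ j, tent (u j) (dist (u j) x / 4) (u i) = 0 := fun i hij =>
    tent_eq_zero_of_notMem_ball <| Set.disjoint_left.1
      (pairwise_disjoint_ball_of_lt_quarter hu hij)
      (mem_ball_self (by linarith [dist_pos_of_lt_quarter hu i]))
  rw [sum_dipoleSum, sum_eq_single_of_mem j (mem_range.2 hjm) fun i _ hij => by
    rw [hother i hij, hx, sub_zero], tent_self hr, hx, sub_zero]

end QuarterSequence

lemma exists_seq_dist_lt_quarter {X : Type*} [MetricSpace X] {x : X} (hx : (𝓝[≠] x).NeBot) :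
    ∃ u : ℕ → X, ∀ n, dist (u (n + 1)) x < dist (u n) x / 4 := by
  have hnext : ∀ y : {y : X // y ≠ x}, ∃ z : {z : X // z ≠ x},
      dist z.1 x < dist y.1 x / 4 := by
    intro y
    have hpos : 0 < dist y.1 x / 4 := by linarith [dist_pos.2 y.2]
    obtain ⟨z, hz, hzx⟩ := mem_closure_iff.1 (mem_closure_iff_nhdsWithin_neBot.2 hx) _ hpos
    exact ⟨⟨z, hz⟩, by rwa [dist_comm]⟩
  choose next hnext using hnext
  obtain ⟨y, hy⟩ := hx.nonempty_of_mem self_mem_nhdsWithin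
  refine ⟨fun n => (next^[n] ⟨y, hy⟩).1, fun n => ?_⟩
  simp only [iterate_succ_apply']
  exact hnext _

lemma tendsto_of_tendsto_iSup_ofReal_abs_sub {ι : Type*} {a : ι → ℝ} {b : ℕ → ι → ℝ}
    (h : Tendsto (fun m => ⨆ i, ENNReal.ofReal |a i - b m i|) atTop (𝓝 0)) (i : ι) :
    Tendsto (fun m => b m i) atTop (𝓝 (a i)) := by
  have h0 : Tendsto (fun m => ENNReal.ofReal |a i - b m i|) atTop (𝓝 0) :=
    tendsto_of_tendsto_of_tendsto_of_le_of_le tendsto_const_nhds h (fun _ => bot_le)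
      fun m => le_iSup (fun i => ENNReal.ofReal |a i - b m i|) i
  have h1 := (ENNReal.tendsto_toReal zero_ne_top).comp h0
  simp only [comp_def, toReal_ofReal (abs_nonneg _), toReal_zero] at h1
  rw [tendsto_iff_dist_tendsto_zero]
  simpa only [Real.dist_eq, abs_sub_comm] using h1

section Measure

variable {X : Type*} [MeasurableSpace X]

lemma one_le_measure_of_le_integral_sub {μ μ' : Measure X} [IsFiniteMeasure μ] {f : X → ℝ}
    {s : Set X} {r : ℝ} (hr : 0 < r) (hs : MeasurableSet s) (hf0 : 0 ≤ f)
    (hfs : f ≤ s.indicator fun _ => r) (h : r ≤ ∫ z, f z ∂μ - ∫ z, f z ∂μ') :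
    1 ≤ μ s := by
  have hle : ∫ z, f z ∂μ ≤ μ.real s * r :=
    calc ∫ z, f z ∂μ ≤ ∫ z, s.indicator (fun _ => r) z ∂μ :=
          integral_mono_of_nonneg (.of_forall hf0) ((integrable_const r).indicator hs)
            (.of_forall hfs)
      _ = μ.real s * r := by rw [integral_indicator_const _ hs, smul_eq_mul]
  have hreal : 1 ≤ μ.real s := by
    nlinarith [integral_nonneg hf0 (μ := μ')]
  rwa [measureReal_def, ← ENNReal.toReal_one,
    ENNReal.toReal_le_toReal one_ne_top (measure_ne_top μ s)] at hreal

lemma tendsto_measure_atTop_zero_of_pairwise_disjoint (μ : Measure X) [IsFiniteMeasure μ]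
    {s : ℕ → Set X} (hs : ∀ n, MeasurableSet (s n)) (hd : Pairwise (Disjoint on s)) :
    Tendsto (fun n => μ (s n)) atTop (𝓝 0) :=
  ENNReal.tendsto_atTop_zero_of_tsum_ne_top <| by
    rw [← measure_iUnion hd hs]
    exact measure_ne_top μ _

end Measure

/-- Let `K` be an infinite compact metric space. Then `(ℳ₀(K), ‖·‖_{KR₀})` is not
complete: there is a `KR₀`-Cauchy sequence of finite linear combinations of dipoles
(balanced finitely supported combinations of Diracs) whose limit functional on
`Lip₀(K)` is not represented by any finite signed Borel measure. -/
theorem stmt18 {K : Type*} [MetricSpace K] [CompactSpace K] [Infinite K]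
    [MeasurableSpace K] [BorelSpace K] :
    ∃ c : ℕ → (K →₀ ℝ),
      (∀ m, ((c m).sum fun _ a => a) = 0) ∧
      (∀ ε > (0 : ℝ), ∃ N, ∀ m ≥ N, ∀ k ≥ N,
        (⨆ f : {f : K → ℝ // LipschitzWith 1 f},
          ENNReal.ofReal |((c m).sum fun z a => a * f.1 z)
            - ((c k).sum fun z a => a * f.1 z)|) ≤ ENNReal.ofReal ε) ∧
      ¬ ∃ ν : MeasureTheory.SignedMeasure K,
        Tendsto (fun m =>
            ⨆ f : {f : K → ℝ // LipschitzWith 1 f},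
              ENNReal.ofReal |((∫ z, f.1 z ∂ν.toJordanDecomposition.posPart)
                  - ∫ z, f.1 z ∂ν.toJordanDecomposition.negPart)
                - ((c m).sum fun z a => a * f.1 z)|)
          atTop (nhds 0) := by
  obtain ⟨x, hx⟩ := exists_nhds_ne_neBot K
  obtain ⟨u, hu⟩ := exists_seq_dist_lt_quarter hx
  refine ⟨dipoleSum u x, fun m => by simpa using sum_dipoleSum u x m fun _ => 1, ?_, ?_⟩
  · intro ε hε
    obtain ⟨N, hN⟩ := Metric.cauchySeq_iff.1
      (summable_dist_of_lt_quarter hu).hasSum.tendsto_sum_nat.cauchySeq ε hε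
    refine ⟨N, fun m hm k hk => iSup_le fun f => ofReal_le_ofReal ?_⟩
    have hf : ∀ j, |f.1 (u j) - f.1 x| ≤ dist (u j) x := fun j => by
      simpa [Real.dist_eq] using f.2.dist_le_mul (u j) x
    rw [sum_dipoleSum, sum_dipoleSum]
    exact (abs_sum_range_sub_sum_range_le hf m k).trans (hN m hm k hk).le
  · rintro ⟨ν, hν⟩
    set μ := ν.toJordanDecomposition.posPart
    have hmass : ∀ j, 1 ≤ μ (ball (u j) (dist (u j) x / 4)) := by
      intro j
      have hvalue := tendsto_nhds_unique
        (tendsto_of_tendsto_iSup_ofReal_abs_sub hν ⟨_, lipschitzWith_tent (u j) _⟩)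
        (tendsto_const_nhds.congr' <| (eventually_gt_atTop j).mono fun m hm =>
          (sum_dipoleSum_tent hu hm).symm)
      exact one_le_measure_of_le_integral_sub (by linarith [dist_pos_of_lt_quarter hu j])
        isOpen_ball.measurableSet (tent_nonneg _ _) (tent_le_indicator_ball _ _) hvalue.ge
    have hsmall := tendsto_measure_atTop_zero_of_pairwise_disjoint μ
      (fun _ => isOpen_ball.measurableSet) (pairwise_disjoint_ball_of_lt_quarter hu)
    obtain ⟨n, hn⟩ := (hsmall.eventually (gt_mem_nhds one_pos)).exists
    exact (hmass n).not_gt hn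
end
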